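/- Let p ∈ [1,∞), q, s ∈ [1,∞] with q > s, and A = (α₀, α_∞), B = (β₀, β_∞) ∈ ℝ² be such that (p,q,A) and (p,s,B) are admissible Lorentz–Zygmund parameters. If β_∞ < α_∞ ≤ β_∞ + 1/s − 1/q, then for every a > 0: sup{ ‖f^* χ_{(a,∞)}‖_{L^{p,s,B}(0,∞)} : f measurable on (0,∞), ‖f‖_{L^{p,q,A}(0,∞)} ≤ 1 } = ∞; in particular the supremum does not tend to 0 as a → ∞. -/

import Mathlib

open MeasureTheory Set Filter Topology
open scoped ENNReal NNReal

noncomputable section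

/-- The nonincreasing rearrangement of an `ℝ≥0∞`-valued function with respect to `μ`:
`f^*(t) = inf {λ : μ({f > λ}) ≤ t}`. -/
def rearr {α : Type*} [MeasurableSpace α] (μ : Measure α) (f : α → ℝ≥0∞) (t : ℝ) : ℝ≥0∞ :=
  sInf {l : ℝ≥0∞ | μ {x | l < f x} ≤ ENNReal.ofReal t}

/-- Lebesgue measure on `(0,∞)`. -/
def μI : Measure ℝ := volume.restrict (Set.Ioi (0 : ℝ))

/-- `ℓ(t) = 1 + |log t|`. -/
def ell (t : ℝ) : ℝ := 1 + |Real.log t|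

/-- The broken-logarithm power `ℓ^A(t)`, equal to `ℓ(t)^{α₀}` for `t ≤ 1` and to
`ℓ(t)^{α_∞}` for `t > 1`, where `A = (α₀, α_∞)`. -/
def ellA (A : ℝ × ℝ) (t : ℝ) : ℝ := if t ≤ 1 then ell t ^ A.1 else ell t ^ A.2

/-- The `L^q(0,∞)` norm (with `q ∈ [1,∞]`) of a nonnegative function. -/
def lqNorm (q : ℝ≥0∞) (g : ℝ → ℝ≥0∞) : ℝ≥0∞ :=
  if q = ∞ then essSup g μI
  else (∫⁻ t in Set.Ioi (0 : ℝ), g t ^ q.toReal) ^ q.toReal⁻¹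

/-- The Lorentz–Zygmund functional
`‖f‖_{L^{p,q,A}(0,∞)} = ‖ t^{1/p - 1/q} ℓ^A(t) f^*(t) ‖_{L^q(0,∞)}`
(with the conventions `1/∞ = 0`). -/
def lzNorm (p q : ℝ≥0∞) (A : ℝ × ℝ) (f : ℝ → ℝ≥0∞) : ℝ≥0∞ :=
  lqNorm q fun t => ENNReal.ofReal (t ^ (p.toReal⁻¹ - q.toReal⁻¹) * ellA A t) * rearr μI f t

/-- Admissibility of Lorentz–Zygmund parameters: the functional `‖·‖_{L^{p,q,A}}` is
equivalent to a rearrangement-invariant norm. -/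
def LZAdmissible (p q : ℝ≥0∞) (A : ℝ × ℝ) : Prop :=
  (p = 1 ∧ q = 1 ∧ 0 ≤ A.1 ∧ A.2 ≤ 0) ∨
  (1 < p ∧ p < ∞ ∧ 1 ≤ q) ∨
  (p = ∞ ∧ 1 ≤ q ∧ q < ∞ ∧ A.1 + q.toReal⁻¹ < 0) ∨
  (p = ∞ ∧ q = ∞ ∧ A.1 ≤ 0)


/-!
A single function makes the supremum infinite. Let `φ(t) = t^{-1/p} ℓ(t)^{-α} ℓ(ℓ(t))^{-1/s}` with
`α = α_∞ + 1/q`, and `F(t) = φ(max t T)` with `T` so large that `φ` decreases on `[T, ∞)`; then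
`F^* ≤ F`. For `t > T` the `L^{p,q,A}` integrand of `F` is `(t ℓ(t))^{-1} ℓ(ℓ(t))^{-q/s}`, which is
integrable at `∞` because `q > s`, and below `T` the weight is integrable, so `‖F‖_{p,q,A} < ∞`.
The rearrangement of the tail `F^* χ_{(a,∞)}` still dominates `φ(2t)` for large `t`, and
`α ≤ β_∞ + 1/s - 1/q` makes the `L^{p,s,B}` integrand dominate `(t ℓ(t) ℓ(ℓ(t)))^{-1}`, whose
integral diverges at `∞`. Normalising `F` finishes the proof.
-/
lemma LZAdmissible.one_le_of_ne_top {p q : ℝ≥0∞} {A : ℝ × ℝ} (h : LZAdmissible p q A)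
    (hp : p ≠ ∞) : 1 ≤ p ∧ 1 ≤ q := by
  rcases h with ⟨rfl, rfl, -⟩ | ⟨hp1, -, hq1⟩ | ⟨rfl, -⟩ | ⟨rfl, -⟩
  · exact ⟨le_rfl, le_rfl⟩
  · exact ⟨hp1.le, hq1⟩
  all_goals exact absurd rfl hp

lemma rearr_antitone (f : ℝ → ℝ≥0∞) : Antitone (rearr μI f) :=
  fun _ _ h => sInf_le_sInf fun _ hl => hl.trans (ENNReal.ofReal_le_ofReal h)

lemma rearr_le_of_antitone {F : ℝ → ℝ≥0∞} (hF : Antitone F) (t : ℝ) : rearr μI F t ≤ F t := by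
  refine sInf_le ?_
  have hsub : {x | F t < F x} ∩ Ioi 0 ⊆ Ioo 0 t :=
    fun x ⟨hx, hx0⟩ => ⟨hx0, lt_of_not_ge fun htx => (hF htx).not_gt hx⟩
  calc μI {x | F t < F x} = volume ({x | F t < F x} ∩ Ioi 0) :=
        Measure.restrict_apply' measurableSet_Ioi
    _ ≤ volume (Ioo 0 t) := measure_mono hsub
    _ = ENNReal.ofReal t := by rw [Real.volume_Ioo, sub_zero]

lemma le_rearr_of_le_on_Ioc {f : ℝ → ℝ≥0∞} {c : ℝ≥0∞} {a t t' : ℝ} (ha : 0 ≤ a) (ht : 0 ≤ t)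
    (htt' : t < t') (hf : ∀ x ∈ Ioc a (a + t'), c ≤ f x) : c ≤ rearr μI f t := by
  refine le_sInf fun l hl => not_lt.mp fun hlc => htt'.not_ge ?_
  have hsub : Ioc a (a + t') ⊆ {x | l < f x} := fun x hx => hlc.trans_le (hf x hx)
  have hvol : μI (Ioc a (a + t')) = ENNReal.ofReal t' := by
    have hIoc : Ioc a (a + t') ⊆ Ioi 0 := fun x hx => ha.trans_lt hx.1
    rw [μI, Measure.restrict_apply measurableSet_Ioc, inter_eq_self_of_subset_left hIoc,
      Real.volume_Ioc, add_sub_cancel_left]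
  have := (hvol.symm.le.trans (measure_mono hsub)).trans hl
  exact (ENNReal.ofReal_le_ofReal_iff ht).mp this

lemma le_rearr_indicator_rearr {F : ℝ → ℝ≥0∞} (hF : Antitone F) {a t : ℝ} (ha : 0 ≤ a)
    (ht : 0 ≤ t) : F (a + t + 2) ≤ rearr μI ((Ioi a).indicator (rearr μI F)) t := by
  have hF' : F (a + t + 2) ≤ rearr μI F (a + t + 1) :=
    le_rearr_of_le_on_Ioc le_rfl (by linarith) (by linarith : a + t + 1 < a + t + 2)
      fun x hx => hF (by simpa using hx.2)
  refine le_rearr_of_le_on_Ioc ha ht (lt_add_one t) fun x hx => ?_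
  rw [indicator_of_mem (show x ∈ Ioi a from hx.1)]
  exact hF'.trans (rearr_antitone F (by linarith [hx.2]))

lemma rearr_const_mul (f : ℝ → ℝ≥0∞) {c : ℝ≥0∞} (hc₀ : c ≠ 0) (hc : c ≠ ∞) (t : ℝ) :
    rearr μI (fun x => c * f x) t = c * rearr μI f t := by
  have hlevel : ∀ l, {x | c * l < c * f x} = {x | l < f x} := fun l => by
    ext x; exact ENNReal.mul_lt_mul_iff_right hc₀ hc
  have hset : {l | μI {x | l < c * f x} ≤ ENNReal.ofReal t} =
      (c * ·) '' {l | μI {x | l < f x} ≤ ENNReal.ofReal t} := by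
    ext l
    have hcancel : c * (c⁻¹ * l) = l := by rw [← mul_assoc, ENNReal.mul_inv_cancel hc₀ hc, one_mul]
    refine ⟨fun hl => ⟨c⁻¹ * l, ?_, hcancel⟩, ?_⟩
    · change μI _ ≤ _
      rwa [← hlevel, hcancel]
    · rintro ⟨l, hl, rfl⟩
      change μI _ ≤ _
      rwa [hlevel]
  rw [rearr, rearr, hset]
  exact (map_sInf (ENNReal.mulLeftOrderIso c (ENNReal.isUnit_iff.2 ⟨hc₀, hc⟩)) _).symm

lemma lqNorm_mono {q : ℝ≥0∞} {g g' : ℝ → ℝ≥0∞} (h : ∀ t, g t ≤ g' t) :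
    lqNorm q g ≤ lqNorm q g' := by
  unfold lqNorm
  split
  · exact essSup_mono_ae (.of_forall h)
  · gcongr with t
    exact h t

lemma lqNorm_const_mul {q : ℝ≥0∞} (hq : q ≠ 0) {c : ℝ≥0∞} (hc : c ≠ ∞) (g : ℝ → ℝ≥0∞) :
    lqNorm q (fun t => c * g t) = c * lqNorm q g := by
  unfold lqNorm
  split
  · exact ENNReal.essSup_const_mul
  · rename_i hq'
    have hQ : 0 < q.toReal := ENNReal.toReal_pos hq hq'
    simp only [ENNReal.mul_rpow_of_nonneg _ _ hQ.le]
    rw [lintegral_const_mul' _ _ (ENNReal.rpow_ne_top_of_nonneg hQ.le hc),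
      ENNReal.mul_rpow_of_nonneg _ _ (inv_nonneg.2 hQ.le), ← ENNReal.rpow_mul,
      mul_inv_cancel₀ hQ.ne', ENNReal.rpow_one]

lemma lzNorm_const_mul (p : ℝ≥0∞) {q : ℝ≥0∞} (A : ℝ × ℝ) (hq : q ≠ 0) {c : ℝ≥0∞} (hc₀ : c ≠ 0)
    (hc : c ≠ ∞) (f : ℝ → ℝ≥0∞) : lzNorm p q A (fun x => c * f x) = c * lzNorm p q A f := by
  unfold lzNorm
  rw [← lqNorm_const_mul hq hc]
  simp only [rearr_const_mul f hc₀ hc, mul_left_comm]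

lemma lqNorm_eq_top {q : ℝ≥0∞} (hq₀ : q ≠ 0) (hq : q ≠ ∞) {g : ℝ → ℝ≥0∞}
    (hg : ∫⁻ t in Ioi 0, g t ^ q.toReal = ∞) : lqNorm q g = ∞ := by
  rw [lqNorm, if_neg hq, hg]
  exact ENNReal.top_rpow_of_pos (inv_pos.2 (ENNReal.toReal_pos hq₀ hq))

lemma iSup_lzNorm_tail_eq_top {p q s : ℝ≥0∞} {A B : ℝ × ℝ} (hq : q ≠ 0) (hs : s ≠ 0) {a : ℝ}
    {F : ℝ → ℝ≥0∞} (hF : Measurable F) (hfin : lzNorm p q A F ≠ ∞)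
    (htail : lzNorm p s B ((Ioi a).indicator (rearr μI F)) = ∞) :
    (⨆ (f : ℝ → ℝ≥0∞) (_ : Measurable f) (_ : lzNorm p q A f ≤ 1),
      lzNorm p s B ((Ioi a).indicator fun t => rearr μI f t)) = ∞ := by
  -- dividing by `‖F‖ + 1` rather than `‖F‖` avoids a separate case `‖F‖ = 0`
  set c := (lzNorm p q A F + 1)⁻¹
  have hc₀ : c ≠ 0 := ENNReal.inv_ne_zero.2 (ENNReal.add_ne_top.2 ⟨hfin, ENNReal.one_ne_top⟩)
  have hc : c ≠ ∞ := ENNReal.inv_ne_top.2 (by simp)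
  have hnorm : lzNorm p q A (fun x => c * F x) ≤ 1 := by
    rw [lzNorm_const_mul p A hq hc₀ hc, mul_comm, ← div_eq_mul_inv]
    exact ENNReal.div_le_of_le_mul (by rw [one_mul]; exact le_self_add)
  have htail' : ((Ioi a).indicator fun t => rearr μI (fun x => c * F x) t) =
      fun t => c * (Ioi a).indicator (rearr μI F) t := by
    funext t
    by_cases ht : t ∈ Ioi a
    · simp only [indicator_of_mem ht, rearr_const_mul F hc₀ hc]
    · simp only [indicator_of_notMem ht, mul_zero]
  refine eq_top_iff.2 (le_iSup₂_of_le (fun x => c * F x) (hF.const_mul c) (le_iSup_of_le hnorm ?_))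
  rw [htail', lzNorm_const_mul p B hs hc₀ hc, htail, ENNReal.mul_top hc₀]

lemma one_le_ell (t : ℝ) : 1 ≤ ell t := le_add_of_nonneg_right (abs_nonneg _)

lemma ell_pos (t : ℝ) : 0 < ell t := one_pos.trans_le (one_le_ell t)

lemma ell_of_one_le {t : ℝ} (ht : 1 ≤ t) : ell t = 1 + Real.log t := by
  rw [ell, abs_of_nonneg (Real.log_nonneg ht)]

lemma ell_le_ell {t t' : ℝ} (ht : 1 ≤ t) (htt' : t ≤ t') : ell t ≤ ell t' := by
  rw [ell_of_one_le ht, ell_of_one_le (ht.trans htt')]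
  gcongr

lemma ell_two_mul_le {t : ℝ} (ht : 1 ≤ t) : ell (2 * t) ≤ 2 * ell t := by
  rw [ell_of_one_le ht, ell_of_one_le (by linarith), Real.log_mul two_ne_zero (by positivity)]
  linarith [Real.log_two_lt_d9, Real.log_nonneg ht]

@[fun_prop]
lemma measurable_ell : Measurable ell := by
  unfold ell
  fun_prop

lemma tendsto_ell_atTop : Tendsto ell atTop atTop :=
  tendsto_atTop_mono (fun t => by unfold ell; linarith [le_abs_self (Real.log t)])
    (tendsto_atTop_add_const_left _ 1 Real.tendsto_log_atTop)

lemma hasDerivAt_ell {t : ℝ} (ht : 1 < t) : HasDerivAt ell t⁻¹ t := by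
  have h : (fun x => 1 + Real.log x) =ᶠ[𝓝 t] ell :=
    (eventually_ge_nhds ht).mono fun x hx => (ell_of_one_le hx).symm
  exact ((Real.hasDerivAt_log (by positivity)).const_add 1).congr_of_eventuallyEq h.symm

lemma one_lt_ell {t : ℝ} (ht : 1 < t) : 1 < ell t := by
  rw [ell_of_one_le ht.le]
  linarith [Real.log_pos ht]

lemma hasDerivAt_ell_ell {t : ℝ} (ht : 1 < t) :
    HasDerivAt (fun x => ell (ell x)) (t * ell t)⁻¹ t := by
  rw [mul_inv, mul_comm]
  exact (hasDerivAt_ell (one_lt_ell ht)).comp t (hasDerivAt_ell ht)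

lemma lintegral_Ioi_ell_ell_rpow_lt_top {ρ T : ℝ} (hρ : 1 < ρ) (hT : 1 < T) :
    ∫⁻ t in Ioi T, ENNReal.ofReal ((t * ell t)⁻¹ * ell (ell t) ^ (-ρ)) < ∞ := by
  have hderiv : ∀ t ∈ Ici T, HasDerivAt (fun x => (1 - ρ)⁻¹ * ell (ell x) ^ (1 - ρ))
      ((t * ell t)⁻¹ * ell (ell t) ^ (-ρ)) t := fun t ht => by
    refine (((hasDerivAt_ell_ell (hT.trans_le ht)).rpow_const (p := 1 - ρ)
      (Or.inl (ell_pos _).ne')).const_mul (1 - ρ)⁻¹).congr_deriv ?_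
    rw [sub_sub_cancel_left]
    field_simp [(by linarith : 1 - ρ ≠ 0)]
  have hlim : Tendsto (fun x => (1 - ρ)⁻¹ * ell (ell x) ^ (1 - ρ)) atTop (𝓝 ((1 - ρ)⁻¹ * 0)) := by
    refine ((tendsto_rpow_neg_atTop (by linarith : 0 < ρ - 1)).comp
      (tendsto_ell_atTop.comp tendsto_ell_atTop)).const_mul _ |>.congr fun x => ?_
    simp only [Function.comp_apply, neg_sub]
  refine (integrableOn_Ioi_deriv_of_nonneg' hderiv (fun t ht => ?_) hlim).setLIntegral_lt_top
  have := ell_pos t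
  have := ell_pos (ell t)
  have : 0 < t := by linarith [hT.trans ht]
  positivity

lemma lintegral_Ioi_inv_ell_ell_eq_top {T : ℝ} (hT : 1 < T) :
    ∫⁻ t in Ioi T, ENNReal.ofReal (t * ell t * ell (ell t))⁻¹ = ∞ := by
  have hderiv : ∀ᶠ t in atTop, HasDerivAt (fun x => Real.log (ell (ell x)))
      (t * ell t * ell (ell t))⁻¹ t := by
    filter_upwards [eventually_gt_atTop 1] with t ht
    refine ((hasDerivAt_ell_ell ht).log (ell_pos _).ne').congr_deriv ?_
    rw [div_eq_mul_inv, mul_inv (t * ell t)]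
  have hnot : ¬ IntegrableOn (fun t => (t * ell t * ell (ell t))⁻¹) (Ioi T) :=
    not_integrableOn_of_tendsto_norm_atTop_of_deriv_isBigO_filter atTop (Ioi_mem_atTop T)
      (hderiv.mono fun _ h => h.differentiableAt)
      (tendsto_norm_atTop_atTop.comp
        (Real.tendsto_log_atTop.comp (tendsto_ell_atTop.comp tendsto_ell_atTop)))
      (EventuallyEq.isBigO (hderiv.mono fun _ h => h.deriv))
  by_contra hfin
  refine hnot ((lintegral_ofReal_ne_top_iff_integrable (by fun_prop) ?_).1 hfin)
  filter_upwards [ae_restrict_mem measurableSet_Ioi] with t ht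
  have := ell_pos t
  have := ell_pos (ell t)
  have : (0 : ℝ) < t := by linarith [show T < t from ht]
  positivity

lemma exists_ell_le_mul_rpow_neg {δ T : ℝ} (hδ : 0 < δ) (hT : 1 ≤ T) :
    ∃ C > 0, ∀ t ∈ Ioc 0 T, ell t ≤ C * t ^ (-δ) := by
  have hTδ : 1 ≤ T ^ δ := Real.one_le_rpow hT hδ.le
  have hC₁ : 1 + δ⁻¹ ≤ (1 + δ⁻¹) * ell T * T ^ δ := by
    rw [mul_assoc]
    exact le_mul_of_one_le_right (by positivity) (one_le_mul_of_one_le_of_one_le (one_le_ell T) hTδ)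
  have := ell_pos T
  refine ⟨(1 + δ⁻¹) * ell T * T ^ δ, by positivity, fun t ⟨ht0, htT⟩ => ?_⟩
  rcases le_or_gt t 1 with ht1 | ht1
  · have hpow : 1 ≤ t ^ (-δ) := Real.one_le_rpow_of_pos_of_le_one_of_nonpos ht0 ht1 (by linarith)
    have hlog : Real.log t⁻¹ ≤ t ^ (-δ) / δ := by
      simpa [Real.inv_rpow ht0.le, ← Real.rpow_neg ht0.le] using
        Real.log_le_rpow_div (inv_nonneg.2 ht0.le) hδ
    calc ell t = 1 + Real.log t⁻¹ := by
          rw [ell, abs_of_nonpos (Real.log_nonpos ht0.le ht1), Real.log_inv]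
      _ ≤ (1 + δ⁻¹) * t ^ (-δ) := by rw [div_eq_inv_mul] at hlog; nlinarith
      _ ≤ _ := mul_le_mul_of_nonneg_right hC₁ (by positivity)
  · have hratio : 1 ≤ T ^ δ * t ^ (-δ) := by
      rw [Real.rpow_neg ht0.le, ← div_eq_mul_inv, one_le_div (by positivity)]
      gcongr
    calc ell t ≤ ell T * (T ^ δ * t ^ (-δ)) :=
          (ell_le_ell ht1.le htT).trans (le_mul_of_one_le_right (ell_pos T).le hratio)
      _ = ell T * T ^ δ * t ^ (-δ) := by ring
      _ ≤ (1 + δ⁻¹) * ell T * T ^ δ * t ^ (-δ) := by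
        gcongr
        exact le_mul_of_one_le_left (ell_pos T).le (le_add_of_nonneg_right (inv_nonneg.2 hδ.le))

lemma ellA_le_ell_rpow (A : ℝ × ℝ) (t : ℝ) : ellA A t ≤ ell t ^ (|A.1| + |A.2| + 1) := by
  unfold ellA
  split <;> refine Real.rpow_le_rpow_of_exponent_le (one_le_ell t) ?_ <;>
    linarith [le_abs_self A.1, le_abs_self A.2, abs_nonneg A.1, abs_nonneg A.2]

lemma exists_ellA_le_mul_rpow_neg (A : ℝ × ℝ) {ε T : ℝ} (hε : 0 < ε) (hT : 1 ≤ T) :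
    ∃ C > 0, ∀ t ∈ Ioc 0 T, ellA A t ≤ C * t ^ (-ε) := by
  set M := |A.1| + |A.2| + 1
  have hM : 0 < M := by positivity
  obtain ⟨C, hC, hle⟩ := exists_ell_le_mul_rpow_neg (div_pos hε hM) hT
  refine ⟨C ^ M, by positivity, fun t ht => ?_⟩
  calc ellA A t ≤ ell t ^ M := ellA_le_ell_rpow A t
    _ ≤ (C * t ^ (-(ε / M))) ^ M := by gcongr; exacts [(ell_pos t).le, hle t ht]
    _ = C ^ M * t ^ (-ε) := by
      rw [Real.mul_rpow hC.le (Real.rpow_nonneg ht.1.le _), ← Real.rpow_mul ht.1.le, neg_mul,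
        div_mul_cancel₀ ε hM.ne']

lemma ellA_of_one_lt (A : ℝ × ℝ) {t : ℝ} (ht : 1 < t) : ellA A t = ell t ^ A.2 :=
  if_neg ht.not_ge

lemma two_rpow_neg_abs_mul_rpow_le {u v m : ℝ} (hu : 0 < u) (huv : u ≤ v) (hv : v ≤ 2 * u) :
    2 ^ (-|m|) * u ^ m ≤ v ^ m := by
  rcases le_or_gt 0 m with hm | hm
  · calc 2 ^ (-|m|) * u ^ m ≤ 1 * v ^ m := by
          gcongr
          exact Real.rpow_le_one_of_one_le_of_nonpos one_le_two (neg_nonpos.2 (abs_nonneg m))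
      _ = v ^ m := one_mul _
  · calc 2 ^ (-|m|) * u ^ m = (2 * u) ^ m := by
          rw [abs_of_neg hm, neg_neg, Real.mul_rpow zero_le_two hu.le]
      _ ≤ v ^ m := Real.rpow_le_rpow_of_nonpos (hu.trans_le huv) hv hm.le

lemma antitoneOn_rpow_neg_mul_ell_rpow {ε m x₀ : ℝ} (hε : 0 < ε) (hx₀ : 1 ≤ x₀)
    (hm : m ≤ ε * ell x₀) : AntitoneOn (fun x => x ^ (-ε) * ell x ^ m) (Ici x₀) := by
  intro x hx y hy hxy
  have hx1 : 1 ≤ x := hx₀.trans hx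
  have hx0 : 0 < x := by linarith
  have hy0 : 0 < y := by linarith
  have hlog : Real.log x ≤ Real.log y := Real.log_le_log hx0 hxy
  have hell : ell x ≤ ell y := ell_le_ell hx1 hxy
  have hdiff : ell y - ell x = Real.log y - Real.log x := by
    rw [ell_of_one_le hx1, ell_of_one_le (hx1.trans hxy), add_sub_add_left_eq_sub]
  have hloglog : Real.log (ell y) - Real.log (ell x) ≤ (Real.log y - Real.log x) / ell x := by
    have := Real.log_le_sub_one_of_pos (div_pos (ell_pos y) (ell_pos x))
    rwa [Real.log_div (ell_pos y).ne' (ell_pos x).ne', div_sub_one (ell_pos x).ne', hdiff] at this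
  have key : m * (Real.log (ell y) - Real.log (ell x)) ≤ ε * (Real.log y - Real.log x) := by
    rcases le_or_gt m 0 with hm0 | hm0
    · nlinarith [Real.log_le_log (ell_pos x) hell]
    · calc m * (Real.log (ell y) - Real.log (ell x))
          ≤ m * ((Real.log y - Real.log x) / ell x) := by gcongr
        _ = m / ell x * (Real.log y - Real.log x) := by ring
        _ ≤ ε * (Real.log y - Real.log x) := by
          refine mul_le_mul_of_nonneg_right ?_ (sub_nonneg.2 hlog)
          rw [div_le_iff₀ (ell_pos x)]
          exact hm.trans (by gcongr; exact ell_le_ell hx₀ hx)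
  dsimp only
  rw [Real.rpow_def_of_pos hx0, Real.rpow_def_of_pos hy0, Real.rpow_def_of_pos (ell_pos x),
    Real.rpow_def_of_pos (ell_pos y), ← Real.exp_add, ← Real.exp_add, Real.exp_le_exp]
  linarith

def profile (P α γ x : ℝ) : ℝ := x ^ (-P⁻¹) * ell x ^ (-α) * ell (ell x) ^ (-γ)

-- Here `ℓ = 2 + 2P|α|`, large enough for `x ^ (-1/(2P)) ℓ(x) ^ (-α)` to decrease beyond it.
def profileThreshold (P α : ℝ) : ℝ := Real.exp (1 + 2 * P * |α|)

def truncProfile (P α γ : ℝ) (x : ℝ) : ℝ≥0∞ :=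
  ENNReal.ofReal (profile P α γ (max x (profileThreshold P α)))

lemma profile_pos (P α γ : ℝ) {x : ℝ} (hx : 0 < x) : 0 < profile P α γ x := by
  have := ell_pos x
  have := ell_pos (ell x)
  unfold profile
  positivity

lemma one_lt_profileThreshold {P : ℝ} (α : ℝ) (hP : 0 < P) : 1 < profileThreshold P α :=
  Real.one_lt_exp_iff.2 (by positivity)

lemma ell_profileThreshold {P : ℝ} (α : ℝ) (hP : 0 < P) :
    ell (profileThreshold P α) = 2 + 2 * P * |α| := by
  rw [ell_of_one_le (one_lt_profileThreshold α hP).le, profileThreshold, Real.log_exp]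
  ring

lemma antitoneOn_profile {P α γ : ℝ} (hP : 0 < P) (hγ : 0 ≤ γ) :
    AntitoneOn (profile P α γ) (Ici (profileThreshold P α)) := by
  set T := profileThreshold P α
  have hT : 1 ≤ T := (one_lt_profileThreshold α hP).le
  have hsplit : ∀ x, 0 < x → profile P α γ x =
      (x ^ (-(2 * P)⁻¹) * ell x ^ (-α)) * (x ^ (-(2 * P)⁻¹) * ell (ell x) ^ (-γ)) := fun x hx => by
    rw [profile, show -P⁻¹ = -(2 * P)⁻¹ + -(2 * P)⁻¹ by field_simp; ring, Real.rpow_add hx]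
    ring
  have hm : -α ≤ (2 * P)⁻¹ * ell T := by
    rw [ell_profileThreshold α hP]
    field_simp
    nlinarith [neg_abs_le α]
  have h₁ := antitoneOn_rpow_neg_mul_ell_rpow (by positivity) hT hm
  intro x hx y hy hxy
  have hx0 : 0 < x := by linarith [show T ≤ x from hx]
  have hy0 : 0 < y := hx0.trans_le hxy
  rw [hsplit x hx0, hsplit y hy0]
  have := ell_pos (ell y)
  gcongr ?_ * (?_ * ?_)
  · have := ell_pos x
    positivity
  · exact h₁ hx hy hxy
  · exact Real.rpow_le_rpow_of_nonpos hx0 hxy (neg_nonpos.2 (by positivity))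
  · exact Real.rpow_le_rpow_of_nonpos (ell_pos _) (ell_le_ell (one_le_ell x)
      (ell_le_ell (hT.trans hx) hxy)) (neg_nonpos.2 hγ)

lemma truncProfile_antitone {P α γ : ℝ} (hP : 0 < P) (hγ : 0 ≤ γ) :
    Antitone (truncProfile P α γ) := fun x y hxy =>
  ENNReal.ofReal_le_ofReal <| antitoneOn_profile hP hγ (mem_Ici.2 (le_max_right x _))
    (mem_Ici.2 (le_max_right y _)) (max_le_max_right _ hxy)

lemma measurable_truncProfile (P α γ : ℝ) : Measurable (truncProfile P α γ) := by
  unfold truncProfile profile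
  fun_prop

lemma profile_two_mul_ge (P α γ : ℝ) {t : ℝ} (ht : 1 ≤ t) :
    2 ^ (-P⁻¹) * 2 ^ (-|α|) * 2 ^ (-|γ|) * profile P α γ t ≤ profile P α γ (2 * t) := by
  have hlog₁ := ell_two_mul_le ht
  have hlog₂ : ell (ell (2 * t)) ≤ 2 * ell (ell t) :=
    (ell_le_ell (one_le_ell _) hlog₁).trans (ell_two_mul_le (one_le_ell t))
  have h₁ : 2 ^ (-|α|) * ell t ^ (-α) ≤ ell (2 * t) ^ (-α) := by
    simpa only [abs_neg] using
      two_rpow_neg_abs_mul_rpow_le (m := -α) (ell_pos t) (ell_le_ell ht (by linarith)) hlog₁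
  have h₂ : 2 ^ (-|γ|) * ell (ell t) ^ (-γ) ≤ ell (ell (2 * t)) ^ (-γ) := by
    simpa only [abs_neg] using two_rpow_neg_abs_mul_rpow_le (m := -γ) (ell_pos _)
      (ell_le_ell (one_le_ell t) (ell_le_ell ht (by linarith))) hlog₂
  have := ell_pos t
  have := ell_pos (ell t)
  calc 2 ^ (-P⁻¹) * 2 ^ (-|α|) * 2 ^ (-|γ|) * profile P α γ t
      = (2 * t) ^ (-P⁻¹) * (2 ^ (-|α|) * ell t ^ (-α)) * (2 ^ (-|γ|) * ell (ell t) ^ (-γ)) := by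
        rw [profile, Real.mul_rpow zero_le_two (by linarith)]
        ring
    _ ≤ profile P α γ (2 * t) := by
        have := ell_pos (2 * t)
        have : 0 < 2 * t := by linarith
        unfold profile
        gcongr

lemma rpow_mul_ell_rpow_mul_profile (P α γ r β : ℝ) {t : ℝ} (ht : 0 < t) :
    t ^ (P⁻¹ - r) * ell t ^ β * profile P α γ t =
      t ^ (-r) * ell t ^ (β - α) * ell (ell t) ^ (-γ) := by
  have h₁ : t ^ (P⁻¹ - r) * t ^ (-P⁻¹) = t ^ (-r) := by
    rw [← Real.rpow_add ht]; ring_nf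
  have h₂ : ell t ^ β * ell t ^ (-α) = ell t ^ (β - α) := by
    rw [← Real.rpow_add (ell_pos t), sub_eq_add_neg]
  rw [profile, ← h₁, ← h₂]
  ring

def weightedProfile (A : ℝ × ℝ) (P r γ t : ℝ) : ℝ :=
  t ^ (P⁻¹ - r) * ellA A t * profile P (A.2 + r) γ (max t (profileThreshold P (A.2 + r)))

lemma lzNorm_truncProfile_le (p q : ℝ≥0∞) (A : ℝ × ℝ) {γ : ℝ} (hP : 0 < p.toReal)
    (hγ : 0 ≤ γ) : lzNorm p q A (truncProfile p.toReal (A.2 + q.toReal⁻¹) γ) ≤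
      lqNorm q fun t => ENNReal.ofReal (weightedProfile A p.toReal q.toReal⁻¹ γ t) := by
  refine lqNorm_mono fun t => ?_
  rw [weightedProfile, ENNReal.ofReal_mul' (profile_pos _ _ _
    (zero_lt_one.trans ((one_lt_profileThreshold _ hP).trans_le (le_max_right t _)))).le]
  gcongr
  exact rearr_le_of_antitone (truncProfile_antitone hP hγ) t

lemma exists_weightedProfile_le (A : ℝ × ℝ) {P r γ : ℝ} (hP : 0 < P) :
    ∃ C ≥ 0, ∀ t ∈ Ioc 0 (profileThreshold P (A.2 + r)),
      weightedProfile A P r γ t ≤ C * t ^ ((2 * P)⁻¹ - r) := by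
  set T := profileThreshold P (A.2 + r)
  have hT : 1 < T := one_lt_profileThreshold _ hP
  obtain ⟨C, hC, hle⟩ := exists_ellA_le_mul_rpow_neg A (ε := (2 * P)⁻¹) (by positivity) hT.le
  have hprof := profile_pos P (A.2 + r) γ (zero_lt_one.trans hT)
  refine ⟨C * profile P (A.2 + r) γ T, by positivity, fun t ht => ?_⟩
  calc weightedProfile A P r γ t
      ≤ t ^ (P⁻¹ - r) * (C * t ^ (-(2 * P)⁻¹)) * profile P (A.2 + r) γ T := by
        rw [weightedProfile, max_eq_right ht.2]
        gcongr
        exacts [Real.rpow_nonneg ht.1.le _, hle t ht]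
    _ = C * profile P (A.2 + r) γ T * (t ^ (P⁻¹ - r) * t ^ (-(2 * P)⁻¹)) := by ring
    _ = C * profile P (A.2 + r) γ T * t ^ ((2 * P)⁻¹ - r) := by
        rw [← Real.rpow_add ht.1]
        congr 2
        field_simp
        ring

lemma weightedProfile_eq (A : ℝ × ℝ) {P r γ t : ℝ} (hP : 0 < P)
    (ht : profileThreshold P (A.2 + r) < t) :
    weightedProfile A P r γ t = t ^ (-r) * ell t ^ (-r) * ell (ell t) ^ (-γ) := by
  have ht₁ : 1 < t := (one_lt_profileThreshold _ hP).trans ht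
  rw [weightedProfile, max_eq_left ht.le, ellA_of_one_lt A ht₁,
    rpow_mul_ell_rpow_mul_profile _ _ _ _ _ (zero_lt_one.trans ht₁), sub_add_cancel_left]

lemma lqNorm_top_weightedProfile_lt_top (A : ℝ × ℝ) {P γ : ℝ} (hP : 0 < P) (hγ : 0 ≤ γ) :
    lqNorm ∞ (fun t => ENNReal.ofReal (weightedProfile A P 0 γ t)) < ∞ := by
  set T := profileThreshold P (A.2 + 0)
  obtain ⟨C, hC₀, hC⟩ := exists_weightedProfile_le A (r := 0) (γ := γ) hP
  rw [lqNorm, if_pos rfl]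
  refine (essSup_le_of_ae_le (ENNReal.ofReal (max (C * T ^ (2 * P)⁻¹) 1))
    (ae_restrict_of_forall_mem measurableSet_Ioi fun t (ht : 0 < t) => ?_)).trans_lt
    ENNReal.ofReal_lt_top
  refine ENNReal.ofReal_le_ofReal ?_
  rcases le_or_gt t T with htT | htT
  · calc _ ≤ C * t ^ ((2 * P)⁻¹ - 0) := hC t ⟨ht, htT⟩
      _ ≤ C * T ^ (2 * P)⁻¹ := by rw [sub_zero]; gcongr
      _ ≤ _ := le_max_left _ _
  · rw [weightedProfile_eq A hP htT, neg_zero, Real.rpow_zero, Real.rpow_zero, one_mul, one_mul]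
    exact (Real.rpow_le_one_of_one_le_of_nonpos (one_le_ell _) (neg_nonpos.2 hγ)).trans
      (le_max_right _ _)

lemma lqNorm_weightedProfile_lt_top (A : ℝ × ℝ) {P γ : ℝ} {q : ℝ≥0∞} (hP : 0 < P) (hq : q ≠ ∞)
    (hqγ : 1 < q.toReal * γ) :
    lqNorm q (fun t => ENNReal.ofReal (weightedProfile A P q.toReal⁻¹ γ t)) < ∞ := by
  set Q := q.toReal
  set T := profileThreshold P (A.2 + Q⁻¹)
  have hT : 1 < T := one_lt_profileThreshold _ hP
  have hQ : 0 < Q := ENNReal.toReal_pos (by rintro rfl; simp [Q] at hqγ; linarith) hq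
  have hrQ : Q⁻¹ * Q = 1 := inv_mul_cancel₀ hQ.ne'
  obtain ⟨C, hC₀, hC⟩ := exists_weightedProfile_le A (r := Q⁻¹) (γ := γ) hP
  rw [lqNorm, if_neg hq]
  refine ENNReal.rpow_lt_top_of_nonneg (by positivity) (ne_of_lt ?_)
  rw [← Ioc_union_Ioi_eq_Ioi (zero_le_one.trans hT.le), lintegral_union measurableSet_Ioi
    (Ioc_disjoint_Ioi le_rfl)]
  refine ENNReal.add_lt_top.2 ⟨?_, ?_⟩
  · have hexp : -1 < Q * (2 * P)⁻¹ - 1 := by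
      have : 0 < Q * (2 * P)⁻¹ := by positivity
      linarith
    have hint : IntegrableOn (fun t => C ^ Q * t ^ (Q * (2 * P)⁻¹ - 1)) (Ioc 0 T) :=
      ((intervalIntegrable_iff_integrableOn_Ioc_of_le (by linarith)).1
        (intervalIntegral.intervalIntegrable_rpow' hexp)).const_mul _
    refine (setLIntegral_mono' measurableSet_Ioc fun t ht => ?_).trans_lt
      hint.setLIntegral_lt_top
    calc _ ≤ ENNReal.ofReal (C * t ^ ((2 * P)⁻¹ - Q⁻¹)) ^ Q :=
          ENNReal.rpow_le_rpow (ENNReal.ofReal_le_ofReal (hC t ht)) hQ.le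
      _ = ENNReal.ofReal (C ^ Q * t ^ (Q * (2 * P)⁻¹ - 1)) := by
          have := ht.1
          rw [ENNReal.ofReal_rpow_of_nonneg (by positivity) hQ.le,
            Real.mul_rpow hC₀ (by positivity), ← Real.rpow_mul this.le, sub_mul, hrQ, mul_comm _ Q]
  · refine (setLIntegral_mono' measurableSet_Ioi fun t ht => le_of_eq ?_).trans_lt
      (lintegral_Ioi_ell_ell_rpow_lt_top hqγ hT)
    have ht0 : 0 < t := by linarith [hT.trans ht]
    have := ell_pos t
    have := ell_pos (ell t)
    rw [weightedProfile_eq A hP ht, ENNReal.ofReal_rpow_of_nonneg (by positivity) hQ.le,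
      Real.mul_rpow (by positivity) (by positivity), Real.mul_rpow (by positivity) (by positivity),
      ← Real.rpow_mul ht0.le, ← Real.rpow_mul (ell_pos t).le, ← Real.rpow_mul (ell_pos _).le,
      neg_mul, hrQ, Real.rpow_neg_one, Real.rpow_neg_one, mul_inv, neg_mul, mul_comm γ]

lemma lzNorm_truncProfile_lt_top {p q : ℝ≥0∞} (A : ℝ × ℝ) {γ : ℝ} (hp₀ : p ≠ 0) (hp : p ≠ ∞)
    (hγ : 0 ≤ γ) (hqγ : q ≠ ∞ → 1 < q.toReal * γ) :
    lzNorm p q A (truncProfile p.toReal (A.2 + q.toReal⁻¹) γ) < ∞ := by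
  have hP : 0 < p.toReal := ENNReal.toReal_pos hp₀ hp
  refine (lzNorm_truncProfile_le p q A hP hγ).trans_lt ?_
  rcases eq_or_ne q ∞ with rfl | hq
  · simpa using lqNorm_top_weightedProfile_lt_top A hP hγ
  · exact lqNorm_weightedProfile_lt_top A hP hq (hqγ hq)

lemma inv_ell_ell_le_rpow_weight_mul_profile (P α β : ℝ) {S t : ℝ} (hS : 0 < S) (ht : 0 < t)
    (hαβ : -1 ≤ S * (β - α)) :
    (t * ell t * ell (ell t))⁻¹ ≤ (t ^ (P⁻¹ - S⁻¹) * ell t ^ β * profile P α S⁻¹ t) ^ S := by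
  have := ell_pos t
  have := ell_pos (ell t)
  have hSS : -S⁻¹ * S = -1 := by field_simp
  rw [rpow_mul_ell_rpow_mul_profile _ _ _ _ _ ht, Real.mul_rpow (by positivity) (by positivity),
    Real.mul_rpow (by positivity) (by positivity), ← Real.rpow_mul ht.le,
    ← Real.rpow_mul (ell_pos t).le, ← Real.rpow_mul (ell_pos _).le, hSS, Real.rpow_neg_one,
    Real.rpow_neg_one, mul_inv, mul_inv]
  gcongr
  rw [← Real.rpow_neg_one, mul_comm]
  exact Real.rpow_le_rpow_of_exponent_le (one_le_ell t) hαβ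

lemma profile_le_rearr_tail {P α γ a t : ℝ} (hP : 0 < P) (hγ : 0 ≤ γ) (ha : 0 ≤ a)
    (ht : profileThreshold P α + a + 2 < t) :
    ENNReal.ofReal (2 ^ (-P⁻¹) * 2 ^ (-|α|) * 2 ^ (-|γ|) * profile P α γ t) ≤
      rearr μI ((Ioi a).indicator (rearr μI (truncProfile P α γ))) t := by
  have hT := one_lt_profileThreshold α hP
  calc ENNReal.ofReal (2 ^ (-P⁻¹) * 2 ^ (-|α|) * 2 ^ (-|γ|) * profile P α γ t)
      ≤ ENNReal.ofReal (profile P α γ (2 * t)) :=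
        ENNReal.ofReal_le_ofReal (profile_two_mul_ge P α γ (by linarith))
    _ ≤ truncProfile P α γ (a + t + 2) := by
        rw [truncProfile, max_eq_left (by linarith)]
        exact ENNReal.ofReal_le_ofReal (antitoneOn_profile hP hγ
          (show profileThreshold P α ≤ a + t + 2 by linarith)
          (show profileThreshold P α ≤ 2 * t by linarith) (by linarith))
    _ ≤ _ := le_rearr_indicator_rearr (truncProfile_antitone hP hγ) ha (by linarith)

lemma lzNorm_tail_truncProfile_eq_top {p s : ℝ≥0∞} (B : ℝ × ℝ) {α a : ℝ} (hp₀ : p ≠ 0)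
    (hp : p ≠ ∞) (hs₀ : s ≠ 0) (hs : s ≠ ∞) (ha : 0 ≤ a) (hαβ : -1 ≤ s.toReal * (B.2 - α)) :
    lzNorm p s B ((Ioi a).indicator (rearr μI (truncProfile p.toReal α s.toReal⁻¹))) = ∞ := by
  set P := p.toReal
  set S := s.toReal
  set T := profileThreshold P α
  set G := (Ioi a).indicator (rearr μI (truncProfile P α S⁻¹))
  have hP : 0 < P := ENNReal.toReal_pos hp₀ hp
  have hS : 0 < S := ENNReal.toReal_pos hs₀ hs
  have hT : 1 < T := one_lt_profileThreshold α hP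
  set c : ℝ := 2 ^ (-P⁻¹) * 2 ^ (-|α|) * 2 ^ (-|S⁻¹|)
  have hc : 0 < c := by positivity
  have hlow : ∀ t ∈ Ioi (T + a + 2), ENNReal.ofReal (c ^ S * (t * ell t * ell (ell t))⁻¹) ≤
      (ENNReal.ofReal (t ^ (P⁻¹ - S⁻¹) * ellA B t) * rearr μI G t) ^ S := by
    intro t (ht : T + a + 2 < t)
    have ht0 : 0 < t := by linarith
    have := ell_pos t
    have := profile_pos P α S⁻¹ ht0
    rw [ellA_of_one_lt B (by linarith)]
    calc ENNReal.ofReal (c ^ S * (t * ell t * ell (ell t))⁻¹)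
        ≤ ENNReal.ofReal ((t ^ (P⁻¹ - S⁻¹) * ell t ^ B.2 * (c * profile P α S⁻¹ t)) ^ S) := by
          refine ENNReal.ofReal_le_ofReal ?_
          rw [mul_left_comm, Real.mul_rpow hc.le (by positivity)]
          gcongr
          exact inv_ell_ell_le_rpow_weight_mul_profile P α B.2 hS ht0 hαβ
      _ = (ENNReal.ofReal (t ^ (P⁻¹ - S⁻¹) * ell t ^ B.2) *
            ENNReal.ofReal (c * profile P α S⁻¹ t)) ^ S := by
          rw [← ENNReal.ofReal_mul (by positivity),
            ENNReal.ofReal_rpow_of_nonneg (by positivity) hS.le]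
      _ ≤ _ := by
          gcongr
          exact profile_le_rearr_tail hP (inv_nonneg.2 hS.le) ha ht
  refine lqNorm_eq_top hs₀ hs (eq_top_iff.2 ?_)
  calc ∞ = ∫⁻ t in Ioi (T + a + 2), ENNReal.ofReal (c ^ S * (t * ell t * ell (ell t))⁻¹) := by
        simp_rw [ENNReal.ofReal_mul (by positivity : 0 ≤ c ^ S)]
        rw [lintegral_const_mul' _ _ ENNReal.ofReal_ne_top,
          lintegral_Ioi_inv_ell_ell_eq_top (by linarith), ENNReal.mul_top (by positivity)]
    _ ≤ _ := setLIntegral_mono' measurableSet_Ioi hlow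
    _ ≤ _ := lintegral_mono_set (Ioi_subset_Ioi (by linarith))

theorem lz_tail_sup_infinite_general (p q s : ℝ≥0∞) (A B : ℝ × ℝ)
    (hB : LZAdmissible p s B) (hp : p ≠ ∞) (hqs : s < q)
    (h₂ : A.2 ≤ B.2 + s.toReal⁻¹ - q.toReal⁻¹) :
    (∀ a : ℝ, 0 < a →
        (⨆ (f : ℝ → ℝ≥0∞) (_ : Measurable f) (_ : lzNorm p q A f ≤ 1),
          lzNorm p s B ((Set.Ioi a).indicator fun t => rearr μI f t)) = ∞) ∧
      ¬ Tendsto (fun a : ℝ =>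
          ⨆ (f : ℝ → ℝ≥0∞) (_ : Measurable f) (_ : lzNorm p q A f ≤ 1),
            lzNorm p s B ((Set.Ioi a).indicator fun t => rearr μI f t))
        atTop (nhds 0) := by
  obtain ⟨hp₁, hs₁⟩ := hB.one_le_of_ne_top hp
  have hp₀ : p ≠ 0 := (zero_lt_one.trans_le hp₁).ne'
  have hs₀ : s ≠ 0 := (zero_lt_one.trans_le hs₁).ne'
  have hs : s ≠ ∞ := hqs.ne_top
  have hS : 0 < s.toReal := ENNReal.toReal_pos hs₀ hs
  have hqS : q ≠ ∞ → 1 < q.toReal * s.toReal⁻¹ := fun hq => by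
    rw [← div_eq_mul_inv, one_lt_div hS]
    exact ENNReal.toReal_strict_mono hq hqs
  have hαβ : -1 ≤ s.toReal * (B.2 - (A.2 + q.toReal⁻¹)) := by
    have := mul_le_mul_of_nonneg_left (by linarith : -s.toReal⁻¹ ≤ B.2 - (A.2 + q.toReal⁻¹)) hS.le
    rwa [mul_neg, mul_inv_cancel₀ hS.ne'] at this
  have hsup : ∀ a : ℝ, 0 < a → (⨆ (f : ℝ → ℝ≥0∞) (_ : Measurable f) (_ : lzNorm p q A f ≤ 1),
      lzNorm p s B ((Set.Ioi a).indicator fun t => rearr μI f t)) = ∞ := fun a ha =>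
    iSup_lzNorm_tail_eq_top (zero_le.trans_lt hqs).ne' hs₀ (measurable_truncProfile _ _ _)
      (lzNorm_truncProfile_lt_top A hp₀ hp (inv_nonneg.2 hS.le) hqS).ne
      (lzNorm_tail_truncProfile_eq_top B hp₀ hp hs₀ hs ha.le hαβ)
  refine ⟨hsup, fun hlim => ENNReal.top_ne_zero (tendsto_const_nhds_iff (l := atTop (α := ℝ)).1 ?_)⟩
  exact hlim.congr' ((eventually_gt_atTop 0).mono fun a ha => hsup a ha)

/-- for `p < ∞`, `s < q` and `β_∞ < α_∞ ≤ β_∞ + 1/s - 1/q`, the supremum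
of the tails is infinite for every `a > 0`; in particular it does not tend to `0`. -/
theorem lz_tail_sup_infinite (p q s : ℝ≥0∞) (A B : ℝ × ℝ)
    (hA : LZAdmissible p q A) (hB : LZAdmissible p s B) (hp : p ≠ ∞) (hqs : s < q)
    (h₁ : B.2 < A.2) (h₂ : A.2 ≤ B.2 + s.toReal⁻¹ - q.toReal⁻¹) :
    (∀ a : ℝ, 0 < a →
        (⨆ (f : ℝ → ℝ≥0∞) (_ : Measurable f) (_ : lzNorm p q A f ≤ 1),
          lzNorm p s B ((Set.Ioi a).indicator fun t => rearr μI f t)) = ∞) ∧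
      ¬ Tendsto (fun a : ℝ =>
          ⨆ (f : ℝ → ℝ≥0∞) (_ : Measurable f) (_ : lzNorm p q A f ≤ 1),
            lzNorm p s B ((Set.Ioi a).indicator fun t => rearr μI f t))
        atTop (nhds 0) :=
  lz_tail_sup_infinite_general p q s A B hB hp hqs h₂

end
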